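/- Let (θ, ω) be a twice continuously differentiable-in-frequency solution of the inertial frustrated Kuramoto model (so that a_i = ω_i' and a_i' exist), with all weights satisfying 0 ≤ ψ_{ij} ≤ ψ_u, and let c > 2, η = 1 − 2/c. Let I be an open interval of times and ρ a permutation of {1,…,N} such that a_{ρ(1)}(t) ≤ … ≤ a_{ρ(N)}(t) for all t ∈ I, and define A(t) = (Σ_{i=1}^N c^{i−1}·a_{ρ(i)}(t) − Σ_{i=1}^N c^{N−i}·a_{ρ(i)}(t))/S_c and F(t) = Y_c(ω(t)). Then for every t ∈ I: m·A'(t) + A(t) ≤ (2K·ψ_u/η)·F(t). -/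

import Mathlib

open Real Finset

/-- Diameter: max minus min of a finite family of reals. -/
noncomputable def diam {N : ℕ} (v : Fin N → ℝ) : ℝ := (⨆ i, v i) - (⨅ i, v i)

/-- `S_c = Σ_{n=0}^{N-1} c^n`. -/
noncomputable def Sc (N : ℕ) (c : ℝ) : ℝ := ∑ n ∈ Finset.range N, c ^ n

/-- `Y_c(z)`: difference of the two convex-type combinations of the nondecreasing
rearrangement of `z` (weights `c^{i-1}` and `c^{N-i}`), divided by `S_c`. -/
noncomputable def Yc {N : ℕ} (c : ℝ) (z : Fin N → ℝ) : ℝ :=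
  (∑ i : Fin N, c ^ (i : ℕ) * z (Tuple.sort z i) -
   ∑ i : Fin N, c ^ (N - 1 - (i : ℕ)) * z (Tuple.sort z i)) / Sc N c

/-- Difference of the two convex combinations, along a fixed permutation, of a family of
time-dependent quantities. -/
noncomputable def comb {N : ℕ} (c : ℝ) (σ : Equiv.Perm (Fin N)) (g : Fin N → ℝ → ℝ) :
    ℝ → ℝ :=
  fun t => (∑ i : Fin N, c ^ (i : ℕ) * g (σ i) t
    - ∑ i : Fin N, c ^ (N - 1 - (i : ℕ)) * g (σ i) t) / Sc N c

/-! Differentiating the equation gives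
`m a_i' + a_i = (K/N) Σ_j ψ_ij cos(θ_j - θ_i + α) (ω_j - ω_i)`, whose right side is at most
`K ψ_u diam ω` in absolute value. Each of the two combinations in `A` has total weight `S_c`,
so `m A' + A ≤ 2 K ψ_u diam ω`. Finally `η diam ω ≤ Y_c(ω)`: in `Y_c` the largest and the
smallest sorted value each carry the weight `c^{N-1}`, so the numerator is at least
`(2 c^{N-1} - S_c) diam ω ≥ (1 - 2/c) S_c diam ω`. -/

lemma Sc_pos {N : ℕ} (hN : 0 < N) {c : ℝ} (hc : 0 ≤ c) : 0 < Sc N c :=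
  Finset.sum_pos' (fun n _ => pow_nonneg hc n) ⟨0, by simpa using hN, by simp⟩

lemma sum_pow_eq_Sc (N : ℕ) (c : ℝ) : ∑ i : Fin N, c ^ (i : ℕ) = Sc N c :=
  Fin.sum_univ_eq_sum_range _ N

lemma sum_pow_rev_eq_Sc (N : ℕ) (c : ℝ) : ∑ i : Fin N, c ^ (N - 1 - (i : ℕ)) = Sc N c := by
  rw [← sum_pow_eq_Sc]
  exact Fintype.sum_bijective Fin.rev Fin.rev_involutive.bijective _ _
    fun i => by rw [Fin.val_rev]; congr 1; omega

lemma one_sub_two_div_mul_Sc_le {N : ℕ} (hN : 0 < N) {c : ℝ} (hc : 0 < c) :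
    (1 - 2 / c) * Sc N c ≤ 2 * c ^ (N - 1) - Sc N c := by
  have hgeom : Sc N c * (c - 1) = c ^ N - 1 := geom_sum_mul c N
  have hpow : c ^ N = c ^ (N - 1) * c := by rw [← pow_succ, Nat.sub_add_cancel hN]
  rw [show 1 - 2 / c = (c - 2) / c by field_simp, div_mul_eq_mul_div, div_le_iff₀ hc]
  nlinarith

lemma abs_sub_le_diam {N : ℕ} (v : Fin N → ℝ) (i j : Fin N) : |v j - v i| ≤ diam v := by
  have hsup : ∀ k, v k ≤ ⨆ l, v l := le_ciSup (Set.finite_range v).bddAbove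
  have hinf : ∀ k, ⨅ l, v l ≤ v k := ciInf_le (Set.finite_range v).bddBelow
  rw [diam, abs_sub_le_iff]
  constructor <;> linarith [hsup i, hsup j, hinf i, hinf j]

lemma diam_eq_sort {N : ℕ} (hN : 0 < N) (v : Fin N → ℝ) :
    diam v = (v ∘ Tuple.sort v) ⟨N - 1, by omega⟩ - (v ∘ Tuple.sort v) ⟨0, hN⟩ := by
  have : Nonempty (Fin N) := ⟨⟨0, hN⟩⟩
  have hmono := Tuple.monotone_sort v
  have hsort : ∀ i, v i = v (Tuple.sort v ((Tuple.sort v).symm i)) := by simp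
  have hsup : ⨆ i, v i = v (Tuple.sort v ⟨N - 1, by omega⟩) :=
    le_antisymm
      (ciSup_le fun i => (hsort i).trans_le <| hmono <| Fin.le_def.2 (by simp; omega))
      (le_ciSup (Set.finite_range v).bddAbove _)
  have hinf : ⨅ i, v i = v (Tuple.sort v ⟨0, hN⟩) :=
    le_antisymm (ciInf_le (Set.finite_range v).bddBelow _)
      (le_ciInf fun i => (hmono <| Fin.le_def.2 (by simp)).trans_eq (hsort i).symm)
  rw [diam, hsup, hinf]
  rfl

lemma two_mul_pow_sub_Sc_mul_le {N : ℕ} (hN : 0 < N) {c : ℝ} (hc : 0 ≤ c) {w : Fin N → ℝ}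
    (hw : Monotone w) :
    (2 * c ^ (N - 1) - Sc N c) * (w ⟨N - 1, by omega⟩ - w ⟨0, hN⟩) ≤
      ∑ i : Fin N, c ^ (i : ℕ) * w i - ∑ i : Fin N, c ^ (N - 1 - (i : ℕ)) * w i := by
  set top : Fin N := ⟨N - 1, by omega⟩
  set bot : Fin N := ⟨0, hN⟩
  have hbot : ∀ i, w bot ≤ w i := fun i => hw (Fin.le_def.2 (Nat.zero_le _))
  have htop : ∀ i, w i ≤ w top := fun i => hw (Fin.le_def.2 (by simp [top]; omega))
  have hlow : c ^ (N - 1) * (w top - w bot) ≤ ∑ i : Fin N, c ^ (i : ℕ) * (w i - w bot) :=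
    Finset.single_le_sum (f := fun i : Fin N => c ^ (i : ℕ) * (w i - w bot))
      (fun i _ => mul_nonneg (pow_nonneg hc _) (sub_nonneg.2 (hbot i))) (mem_univ top)
  have hhigh :
      c ^ (N - 1) * (w top - w bot) ≤ ∑ i : Fin N, c ^ (N - 1 - (i : ℕ)) * (w top - w i) := by
    simpa [bot] using Finset.single_le_sum
      (f := fun i : Fin N => c ^ (N - 1 - (i : ℕ)) * (w top - w i))
      (fun i _ => mul_nonneg (pow_nonneg hc _) (sub_nonneg.2 (htop i))) (mem_univ bot)
  have hsplit : ∑ i : Fin N, c ^ (i : ℕ) * w i - ∑ i : Fin N, c ^ (N - 1 - (i : ℕ)) * w i =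
      ∑ i : Fin N, c ^ (i : ℕ) * (w i - w bot) + ∑ i : Fin N, c ^ (N - 1 - (i : ℕ)) * (w top - w i)
        - Sc N c * (w top - w bot) := by
    simp only [mul_sub, sum_sub_distrib, ← sum_mul, sum_pow_eq_Sc, sum_pow_rev_eq_Sc]
    ring
  rw [hsplit]
  linarith

lemma one_sub_two_div_mul_diam_le_Yc {N : ℕ} (hN : 0 < N) {c : ℝ} (hc : 0 < c)
    (v : Fin N → ℝ) : (1 - 2 / c) * diam v ≤ Yc c v := by
  have hmono := Tuple.monotone_sort v
  rw [diam_eq_sort hN, Yc, le_div_iff₀ (Sc_pos hN hc.le)]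
  have hcoef := mul_le_mul_of_nonneg_right (one_sub_two_div_mul_Sc_le hN hc)
    (sub_nonneg.2 (hmono (show (⟨0, hN⟩ : Fin N) ≤ ⟨N - 1, by omega⟩ from Nat.zero_le _)))
  calc _ = _ := mul_right_comm _ _ _
    _ ≤ _ := hcoef
    _ ≤ _ := two_mul_pow_sub_Sc_mul_le hN hc.le hmono

section comb

variable {N : ℕ} (c : ℝ) (σ : Equiv.Perm (Fin N))

lemma hasDerivAt_comb {g g' : Fin N → ℝ → ℝ} {t : ℝ} (hg : ∀ i, HasDerivAt (g i) (g' i t) t) :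
    HasDerivAt (comb c σ g) (comb c σ g' t) t :=
  ((HasDerivAt.fun_sum fun i _ => (hg (σ i)).const_mul _).sub
    (HasDerivAt.fun_sum fun i _ => (hg (σ i)).const_mul _)).div_const _

lemma mul_comb_add_comb (a : ℝ) (g h : Fin N → ℝ → ℝ) (t : ℝ) :
    a * comb c σ g t + comb c σ h t = comb c σ (fun i s => a * g i s + h i s) t := by
  simp only [comb, mul_add, sum_add_distrib, mul_left_comm _ a, ← mul_sum]
  ring

variable {c}

lemma comb_le_two_mul (hN : 0 < N) (hc : 0 ≤ c) {g : Fin N → ℝ → ℝ} {t B : ℝ}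
    (hB : ∀ i, |g i t| ≤ B) : comb c σ g t ≤ 2 * B := by
  have hup : ∑ i : Fin N, c ^ (i : ℕ) * g (σ i) t ≤ Sc N c * B := by
    rw [← sum_pow_eq_Sc, sum_mul]
    exact sum_le_sum fun i _ =>
      mul_le_mul_of_nonneg_left (le_of_abs_le (hB (σ i))) (pow_nonneg hc _)
  have hlow : -(Sc N c * B) ≤ ∑ i : Fin N, c ^ (N - 1 - (i : ℕ)) * g (σ i) t := by
    rw [← sum_pow_rev_eq_Sc, sum_mul, ← sum_neg_distrib]
    exact sum_le_sum fun i _ => by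
      rw [← mul_neg]
      exact mul_le_mul_of_nonneg_left (neg_le_of_abs_le (hB (σ i))) (pow_nonneg hc _)
  rw [comb, div_le_iff₀ (Sc_pos hN hc)]
  linarith

end comb

lemma hasDerivAt_coupling {N : ℕ} (K α : ℝ) (ψ : Fin N → Fin N → ℝ) (θ : Fin N → ℝ → ℝ)
    (i : Fin N) {t : ℝ} (hθ : ∀ j, DifferentiableAt ℝ (θ j) t) :
    HasDerivAt (fun s => (K / N) * ∑ j, ψ i j * sin (θ j s - θ i s + α))
      ((K / N) * ∑ j, ψ i j * (cos (θ j t - θ i t + α) * (deriv (θ j) t - deriv (θ i) t))) t :=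
  HasDerivAt.const_mul _ <| HasDerivAt.fun_sum fun j _ => HasDerivAt.const_mul _ <|
    (hasDerivAt_sin _).comp t (((hθ j).hasDerivAt.sub (hθ i).hasDerivAt).add_const α)

lemma abs_coupling_deriv_le {N : ℕ} {K ψu : ℝ} (α : ℝ) (hK : 0 ≤ K) {ψ : Fin N → Fin N → ℝ}
    (hψ : ∀ i j, 0 ≤ ψ i j ∧ ψ i j ≤ ψu) (x v : Fin N → ℝ) (i : Fin N) :
    |(K / N) * ∑ j, ψ i j * (cos (x j - x i + α) * (v j - v i))| ≤ K * ψu * diam v := by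
  have hN : (0 : ℝ) < N := by exact_mod_cast i.pos
  have hterm : ∀ j, |ψ i j * (cos (x j - x i + α) * (v j - v i))| ≤ ψu * diam v := fun j => by
    rw [abs_mul, abs_mul, abs_of_nonneg (hψ i j).1]
    exact mul_le_mul (hψ i j).2
      ((mul_le_mul (abs_cos_le_one _) (abs_sub_le_diam v i j) (abs_nonneg _) zero_le_one).trans_eq
        (one_mul _))
      (by positivity) ((hψ i j).1.trans (hψ i j).2)
  calc |(K / N) * ∑ j, ψ i j * (cos (x j - x i + α) * (v j - v i))|
      ≤ (K / N) * ∑ _j : Fin N, ψu * diam v := by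
        rw [abs_mul, abs_of_nonneg (by positivity)]
        gcongr
        exact (abs_sum_le_sum_abs _ _).trans (sum_le_sum fun j _ => hterm j)
    _ = K * ψu * diam v := by
        rw [sum_const, card_univ, Fintype.card_fin, nsmul_eq_mul]
        field_simp

lemma ContDiff.differentiable_deriv_deriv {f : ℝ → ℝ} (hf : ContDiff ℝ 3 f) :
    Differentiable ℝ (deriv (deriv f)) :=
  (hf.iterate_deriv' 1 2).differentiable one_ne_zero

lemma kuramoto_deriv_eq {N : ℕ} {m K α : ℝ} {Ω : Fin N → ℝ} {ψ : Fin N → Fin N → ℝ}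
    {θ : Fin N → ℝ → ℝ} (hsmooth : ∀ i, ContDiff ℝ 3 (θ i))
    (hode : ∀ i, ∀ t : ℝ, 0 ≤ t →
      m * deriv (deriv (θ i)) t + deriv (θ i) t =
        Ω i + (K / N) * ∑ j : Fin N, ψ i j * Real.sin (θ j t - θ i t + α))
    {t : ℝ} (ht : 0 < t) (i : Fin N) :
    m * deriv (deriv (deriv (θ i))) t + deriv (deriv (θ i)) t =
      (K / N) * ∑ j, ψ i j * (cos (θ j t - θ i t + α) * (deriv (θ j) t - deriv (θ i) t)) := by
  have hode_near : (fun s => m * deriv (deriv (θ i)) s + deriv (θ i) s) =ᶠ[nhds t]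
      fun s => Ω i + (K / N) * ∑ j, ψ i j * sin (θ j s - θ i s + α) :=
    Filter.eventuallyEq_of_mem (Ioi_mem_nhds ht) fun s hs => hode i s (le_of_lt hs)
  have hlhs := ((hsmooth i).differentiable_deriv_deriv t).hasDerivAt.const_mul m
    |>.add (((hsmooth i).iterate_deriv' 2 1).differentiable two_ne_zero t).hasDerivAt
  have hrhs := (hasDerivAt_coupling K α ψ θ i fun j =>
    (hsmooth j).differentiable (by norm_num) t).const_add (Ω i)
  exact hlhs.unique (hrhs.congr_of_eventuallyEq hode_near)

theorem stmt10_general {N : ℕ} (hN : 2 ≤ N) (m K α ψu : ℝ) (hK : 0 < K)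
    (Ω : Fin N → ℝ) (ψ : Fin N → Fin N → ℝ)
    (hψ : ∀ i j, 0 ≤ ψ i j ∧ ψ i j ≤ ψu)
    (θ : Fin N → ℝ → ℝ) (hsmooth : ∀ i, ContDiff ℝ 3 (θ i))
    (hode : ∀ i, ∀ t : ℝ, 0 ≤ t →
      m * deriv (deriv (θ i)) t + deriv (θ i) t =
        Ω i + (K / N) * ∑ j : Fin N, ψ i j * Real.sin (θ j t - θ i t + α))
    (c η : ℝ) (hc : 2 < c) (hη : η = 1 - 2 / c)
    (t1 t2 : ℝ) (ht1 : 0 ≤ t1)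
    (ρ : Equiv.Perm (Fin N)) :
    ∀ t ∈ Set.Ioo t1 t2,
      m * deriv (comb c ρ (fun i => deriv (deriv (θ i)))) t
          + comb c ρ (fun i => deriv (deriv (θ i))) t ≤
        (2 * K * ψu / η) * Yc c (fun i => deriv (θ i) t) := by
  intro t ht
  have hN0 : 0 < N := by omega
  have hψu : 0 ≤ ψu := (hψ ⟨0, hN0⟩ ⟨0, hN0⟩).1.trans (hψ _ _).2
  have hη0 : 0 < η := by rw [hη, sub_pos, div_lt_one (by linarith)]; linarith
  have hforcing : ∀ i, |m * deriv (deriv (deriv (θ i))) t + deriv (deriv (θ i)) t| ≤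
      K * ψu * diam fun i => deriv (θ i) t := fun i => by
    rw [kuramoto_deriv_eq hsmooth hode (ht1.trans_lt ht.1)]
    exact abs_coupling_deriv_le α hK.le hψ _ _ i
  rw [(hasDerivAt_comb c ρ fun i => ((hsmooth i).differentiable_deriv_deriv t).hasDerivAt).deriv,
    mul_comb_add_comb]
  calc _ ≤ 2 * (K * ψu * diam fun i => deriv (θ i) t) :=
        comb_le_two_mul ρ hN0 (by linarith) hforcing
    _ = 2 * K * ψu / η * (η * diam fun i => deriv (θ i) t) := by field_simp
    _ ≤ _ := by
        gcongr
        exact hη ▸ one_sub_two_div_mul_diam_le_Yc hN0 (by linarith) _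

/-- first-order differential inequality for the acceleration combination `A`. -/
theorem stmt10 {N : ℕ} (hN : 2 ≤ N) (m K α ψu : ℝ) (hm : 0 < m) (hK : 0 < K)
    (hα0 : 0 < α) (hα : α < π / 2)
    (Ω : Fin N → ℝ) (ψ : Fin N → Fin N → ℝ)
    (hψ : ∀ i j, 0 ≤ ψ i j ∧ ψ i j ≤ ψu)
    (θ : Fin N → ℝ → ℝ) (hsmooth : ∀ i, ContDiff ℝ 3 (θ i))
    (hode : ∀ i, ∀ t : ℝ, 0 ≤ t →
      m * deriv (deriv (θ i)) t + deriv (θ i) t =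
        Ω i + (K / N) * ∑ j : Fin N, ψ i j * Real.sin (θ j t - θ i t + α))
    (c η : ℝ) (hc : 2 < c) (hη : η = 1 - 2 / c)
    (t1 t2 : ℝ) (ht1 : 0 ≤ t1)
    (ρ : Equiv.Perm (Fin N))
    (hord : ∀ t ∈ Set.Ioo t1 t2, Monotone fun i => deriv (deriv (θ (ρ i))) t) :
    ∀ t ∈ Set.Ioo t1 t2,
      m * deriv (comb c ρ (fun i => deriv (deriv (θ i)))) t
          + comb c ρ (fun i => deriv (deriv (θ i))) t ≤
        (2 * K * ψu / η) * Yc c (fun i => deriv (θ i) t) :=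
  stmt10_general hN m K α ψu hK Ω ψ hψ θ hsmooth hode c η hc hη t1 t2 ht1 ρ
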